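/- arXiv:0901.0747 — 6 statements merged into one kernel-verified Lean document; each statement's English description precedes it below -/
import Mathlib

section
/- (Milnor–Švarc) Let X be a proper geodesic metric space and let a group Γ act on X by isometries, properly discontinuously (for every x ∈ X and r ≥ 0 the set {g ∈ Γ : d(x, g·x) ≤ r} is finite) and cocompactly (there is a compact K ⊆ X with X = ⋃_{g ∈ Γ} g·K). Then Γ admits a finite generating set S, and for every basepoint x₀ ∈ X the orbit map g ↦ g·x₀ is a quasi-isometry from the Cayley graph Δ(Γ,S), equipped with its graph distance, to X. -/
/-- The Cayley graph of a group `Γ` with respect to a generating set `S`: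
vertices are group elements, and `g ≠ h` are adjacent iff `g⁻¹ * h ∈ S ∪ S⁻¹`. -/
def cayleyGraph {Γ : Type*} [Group Γ] (S : Set Γ) : SimpleGraph Γ where
  Adj g h := g ≠ h ∧ g⁻¹ * h ∈ S ∪ S⁻¹
  symm := by
    constructor
    rintro g h ⟨hne, hm⟩
    refine ⟨hne.symm, ?_⟩
    have : h⁻¹ * g = (g⁻¹ * h)⁻¹ := by group
    rw [this]
    rcases hm with h1 | h1
    · exact Or.inr (by simpa using h1)
    · exact Or.inl (by simpa using h1)
  loopless := ⟨fun g h => h.1 rfl⟩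

/-!
The orbit of a basepoint `p` is `R`-dense for some `R`, and the elements moving `p` by at most
`2R + 1` form a finite set `S` by proper discontinuity. Cutting a geodesic from `g • p` to
`h • p` into unit steps and replacing each point by a nearby orbit point `gᵢ • p` gives a chain
`g = g₀, g₁, …, gₙ = h` whose consecutive members differ by an element of `S`, with `n` about
`d(g • p, h • p)`. So `S` generates `Γ` and the word metric is bounded above by the orbit
distance plus a constant; the reverse bound holds because every generator moves `x₀` a bounded
amount.
-/

namespace SimpleGraph

variable {V : Type*}

lemma exists_walk_length_le_of_chain (G : SimpleGraph V) (f : ℕ → V) (n : ℕ)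
    (hf : ∀ i < n, f i = f (i + 1) ∨ G.Adj (f i) (f (i + 1))) :
    ∃ w : G.Walk (f 0) (f n), w.length ≤ n := by
  induction n with
  | zero => exact ⟨.nil, le_rfl⟩
  | succ n ih =>
    obtain ⟨w, hw⟩ := ih fun i hi => hf i (Nat.lt_succ_of_lt hi)
    rcases hf n (Nat.lt_succ_self n) with heq | hadj
    · exact ⟨w.copy rfl heq, by simpa using Nat.le_succ_of_le hw⟩
    · exact ⟨w.concat hadj, by simpa using hw⟩

end SimpleGraph

section Lipschitz

variable {V X : Type*} [PseudoMetricSpace X] {G : SimpleGraph V} {φ : V → X} {M : ℝ}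

lemma dist_le_mul_length_of_walk (hM : ∀ a b, G.Adj a b → dist (φ a) (φ b) ≤ M) {a b : V}
    (w : G.Walk a b) : dist (φ a) (φ b) ≤ M * w.length := by
  induction w with
  | nil => simp
  | @cons a u b hadj w ih =>
    calc dist (φ a) (φ b) ≤ dist (φ a) (φ u) + dist (φ u) (φ b) := dist_triangle _ _ _
      _ ≤ M + M * w.length := add_le_add (hM _ _ hadj) ih
      _ = M * (SimpleGraph.Walk.cons hadj w).length := by
        rw [SimpleGraph.Walk.length_cons]; push_cast; ring

lemma dist_le_mul_graph_dist_of_reachable (hM : ∀ a b, G.Adj a b → dist (φ a) (φ b) ≤ M)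
    {a b : V} (h : G.Reachable a b) : dist (φ a) (φ b) ≤ M * G.dist a b := by
  obtain ⟨w, hw⟩ := h.exists_walk_length_eq_dist
  simpa [hw] using dist_le_mul_length_of_walk hM w

end Lipschitz

def IsGeodesicSpace (X : Type*) [PseudoMetricSpace X] : Prop :=
  ∀ x y : X, ∃ γ : ℝ → X, γ 0 = x ∧ γ (dist x y) = y ∧
    ∀ s ∈ Set.Icc (0 : ℝ) (dist x y), ∀ t ∈ Set.Icc (0 : ℝ) (dist x y),
      dist (γ s) (γ t) = |s - t|

namespace IsGeodesicSpace

variable {X : Type*} [PseudoMetricSpace X]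

lemma exists_chain_dist_succ_le_one (hX : IsGeodesicSpace X) (x y : X) {n : ℕ}
    (hn : dist x y ≤ n) :
    ∃ z : ℕ → X, z 0 = x ∧ z n = y ∧ ∀ i, dist (z i) (z (i + 1)) ≤ 1 := by
  obtain ⟨γ, hγ0, hγ1, hγ⟩ := hX x y
  have hd : 0 ≤ dist x y := dist_nonneg
  have hmem : ∀ i : ℕ, min (i : ℝ) (dist x y) ∈ Set.Icc 0 (dist x y) :=
    fun i => ⟨le_min i.cast_nonneg hd, min_le_right _ _⟩
  refine ⟨fun i => γ (min i (dist x y)), by simpa [hd] using hγ0, by simpa [hn] using hγ1,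
    fun i => ?_⟩
  rw [hγ _ (hmem i) _ (hmem (i + 1))]
  simpa using abs_min_sub_min_le_max (i : ℝ) (dist x y) (i + 1) (dist x y)

variable {V : Type*} {G : SimpleGraph V} {φ : V → X} {R : ℝ}

theorem exists_walk_length_le_dist_add_two (hX : IsGeodesicSpace X)
    (hcov : ∀ y, ∃ v, dist (φ v) y ≤ R)
    (hadj : ∀ a b, dist (φ a) (φ b) ≤ 2 * R + 1 → a = b ∨ G.Adj a b) (g h : V) :
    ∃ w : G.Walk g h, (w.length : ℝ) ≤ dist (φ g) (φ h) + 2 := by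
  choose c hc using hcov
  have hR : 0 ≤ R := dist_nonneg.trans (hc (φ g))
  set n := ⌈dist (φ g) (φ h)⌉₊ + 1
  have hn : dist (φ g) (φ h) ≤ n := (Nat.le_ceil _).trans (by simp [n])
  obtain ⟨z, hz0, hzn, hz⟩ := hX.exists_chain_dist_succ_le_one _ _ hn
  -- `n ≥ 1`, so the chain can start at `g` and end at `h` even when `φ g = φ h`.
  let f : ℕ → V := fun i => if i = 0 then g else if i = n then h else c (z i)
  have hf : ∀ i, dist (φ (f i)) (z i) ≤ R := by
    intro i
    by_cases h0 : i = 0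
    · simp [f, h0, hz0, hR]
    by_cases hin : i = n
    · simp [f, hin, hzn, hR]
    simpa [f, h0, hin] using hc (z i)
  obtain ⟨w, hw⟩ := G.exists_walk_length_le_of_chain f n fun i _ => hadj _ _ <| by
    calc dist (φ (f i)) (φ (f (i + 1)))
        ≤ dist (φ (f i)) (z i) + dist (z i) (z (i + 1)) + dist (z (i + 1)) (φ (f (i + 1))) :=
          dist_triangle4 _ _ _ _
      _ ≤ R + 1 + R := by gcongr <;> simp only [hf, hz, dist_comm (z (i + 1))]
      _ = 2 * R + 1 := by ring
  refine ⟨w.copy (by simp [f]) (by simp [f, n]), ?_⟩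
  calc ((w.copy _ _).length : ℝ) = w.length := by rw [SimpleGraph.Walk.length_copy]
    _ ≤ n := by exact_mod_cast hw
    _ ≤ dist (φ g) (φ h) + 2 := by
      have := Nat.ceil_lt_add_one (dist_nonneg (x := φ g) (y := φ h))
      push_cast [n]
      linarith

end IsGeodesicSpace

section CayleyGraph

variable {Γ : Type*} [Group Γ] {S : Set Γ}

lemma inv_mul_mem_closure_of_cayleyGraph_reachable {a b : Γ}
    (h : (cayleyGraph S).Reachable a b) : a⁻¹ * b ∈ Subgroup.closure S := by
  obtain ⟨w⟩ := h
  induction w with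
  | nil => simp
  | @cons a c b hadj w ih =>
    have hac : a⁻¹ * c ∈ Subgroup.closure S := by
      rcases hadj.2 with hs | hs
      · exact Subgroup.subset_closure hs
      · simpa using Subgroup.inv_mem _ (Subgroup.subset_closure (Set.mem_inv.1 hs))
    simpa [mul_assoc] using Subgroup.mul_mem _ hac ih

lemma closure_eq_top_of_cayleyGraph_connected (h : (cayleyGraph S).Connected) :
    Subgroup.closure S = ⊤ :=
  eq_top_iff.2 fun g _ => by simpa using inv_mul_mem_closure_of_cayleyGraph_reachable (h 1 g)

end CayleyGraph

section IsometricAction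

variable {Γ X : Type*} [Group Γ] [PseudoMetricSpace X] [MulAction Γ X] [IsIsometricSMul Γ X]

lemma dist_smul_smul_eq_dist_inv_mul_smul (a b : Γ) (x : X) :
    dist (a • x) (b • x) = dist x ((a⁻¹ * b) • x) := by
  rw [← dist_smul a x ((a⁻¹ * b) • x), smul_smul, mul_inv_cancel_left]

lemma dist_smul_smul_le_add_two_mul_dist (a b : Γ) (x y : X) :
    dist (a • x) (b • x) ≤ dist (a • y) (b • y) + 2 * dist x y :=
  calc dist (a • x) (b • x) ≤ dist (a • x) (a • y) + dist (a • y) (b • y) + dist (b • y) (b • x) :=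
        dist_triangle4 _ _ _ _
    _ = dist (a • y) (b • y) + 2 * dist x y := by
        rw [dist_smul, dist_smul, dist_comm y x]; ring

lemma exists_dist_smul_le_of_isBounded {K : Set X} (hK : Bornology.IsBounded K)
    (hcov : ∀ x, ∃ g : Γ, ∃ k ∈ K, x = g • k) (p : X) :
    ∃ R ≥ 0, ∀ y, ∃ g : Γ, dist (g • p) y ≤ R := by
  obtain ⟨R, hR, hKR⟩ := hK.subset_closedBall_lt 0 p
  refine ⟨R, hR.le, fun y => ?_⟩
  obtain ⟨g, k, hk, rfl⟩ := hcov y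
  exact ⟨g, by simpa [dist_smul, dist_comm] using hKR hk⟩

lemma eq_or_cayleyGraph_adj_of_dist_smul_le {S : Set Γ} {p : X} {r : ℝ}
    (hS : ∀ g : Γ, dist p (g • p) ≤ r → g ∈ S) {a b : Γ} (h : dist (a • p) (b • p) ≤ r) :
    a = b ∨ (cayleyGraph S).Adj a b := by
  rw [dist_smul_smul_eq_dist_inv_mul_smul] at h
  exact or_iff_not_imp_left.2 fun hab => ⟨hab, Or.inl (hS _ h)⟩

lemma dist_smul_smul_le_sum_of_cayleyGraph_adj (S : Finset Γ) (x : X) {a b : Γ}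
    (h : (cayleyGraph (S : Set Γ)).Adj a b) :
    dist (a • x) (b • x) ≤ ∑ s ∈ S, dist x (s • x) := by
  have hle : ∀ s ∈ S, dist x (s • x) ≤ ∑ s ∈ S, dist x (s • x) :=
    fun s hs => Finset.single_le_sum (f := fun s => dist x (s • x)) (fun _ _ => dist_nonneg) hs
  rw [dist_smul_smul_eq_dist_inv_mul_smul]
  rcases h.2 with hs | hs
  · exact hle _ hs
  · have := hle _ (Set.mem_inv.1 hs)
    rwa [← dist_smul (a⁻¹ * b), smul_inv_smul, dist_comm] at this

end IsometricAction

theorem milnor_svarc_general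
    {X Γ : Type*} [MetricSpace X] [Nonempty X]
    [Group Γ] [MulAction Γ X]
    (hgeo : ∀ x y : X, ∃ γ : ℝ → X, γ 0 = x ∧ γ (dist x y) = y ∧
      ∀ s ∈ Set.Icc (0 : ℝ) (dist x y), ∀ t ∈ Set.Icc (0 : ℝ) (dist x y),
        dist (γ s) (γ t) = |s - t|)
    (hiso : ∀ (g : Γ) (x y : X), dist (g • x) (g • y) = dist x y)
    (hpd : ∀ (x : X) (r : ℝ), 0 ≤ r → {g : Γ | dist x (g • x) ≤ r}.Finite)
    (hcc : ∃ K : Set X, IsCompact K ∧ ∀ x : X, ∃ g : Γ, ∃ k ∈ K, x = g • k) :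
    ∃ S : Finset Γ, Subgroup.closure (S : Set Γ) = ⊤ ∧
      ∀ x₀ : X,
        (∃ k₁ > (0 : ℝ), ∃ k₂ ≥ (0 : ℝ), ∃ k₃ ≥ (0 : ℝ), ∃ k₄ ≥ (0 : ℝ),
          ∀ g h : Γ,
            k₁ * ((cayleyGraph (S : Set Γ)).dist g h : ℝ) - k₂ ≤ dist (g • x₀) (h • x₀) ∧
            dist (g • x₀) (h • x₀) ≤ k₃ * ((cayleyGraph (S : Set Γ)).dist g h : ℝ) + k₄) ∧
        (∃ r ≥ (0 : ℝ), ∀ y : X, ∃ g : Γ, dist y (g • x₀) ≤ r) := by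
  have : IsIsometricSMul Γ X := ⟨fun g => Isometry.of_dist_eq (hiso g)⟩
  obtain ⟨K, hK, hKcov⟩ := hcc
  obtain ⟨p⟩ := ‹Nonempty X›
  obtain ⟨R, hR, hpR⟩ := exists_dist_smul_le_of_isBounded hK.isBounded hKcov p
  set S := (hpd p (2 * R + 1) (by positivity)).toFinset
  have hwalk (g h : Γ) : ∃ w : (cayleyGraph (S : Set Γ)).Walk g h,
      (w.length : ℝ) ≤ dist (g • p) (h • p) + 2 :=
    IsGeodesicSpace.exists_walk_length_le_dist_add_two hgeo hpR
      (fun _ _ => eq_or_cayleyGraph_adj_of_dist_smul_le (by simp [S])) g h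
  have hconn : (cayleyGraph (S : Set Γ)).Connected :=
    .mk fun g h => (hwalk g h).choose.reachable
  refine ⟨S, closure_eq_top_of_cayleyGraph_connected hconn, fun x₀ => ⟨?_, ?_⟩⟩
  · refine ⟨1, one_pos, 2 * dist p x₀ + 2, by positivity, ∑ s ∈ S, dist x₀ (s • x₀),
      Finset.sum_nonneg fun _ _ => dist_nonneg, 0, le_rfl, fun g h => ⟨?_, ?_⟩⟩
    · obtain ⟨w, hw⟩ := hwalk g h
      have hdist : ((cayleyGraph (S : Set Γ)).dist g h : ℝ) ≤ w.length := by
        exact_mod_cast SimpleGraph.dist_le w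
      linarith [dist_smul_smul_le_add_two_mul_dist g h p x₀]
    · simpa using dist_le_mul_graph_dist_of_reachable
        (fun _ _ => dist_smul_smul_le_sum_of_cayleyGraph_adj S x₀) (hconn g h)
  · obtain ⟨r, hr, hx₀r⟩ := exists_dist_smul_le_of_isBounded hK.isBounded hKcov x₀
    exact ⟨r, hr, fun y => (hx₀r y).imp fun _ hg => by rwa [dist_comm]⟩

/-- **Milnor–Švarc lemma.** If a group `Γ` acts by isometries, properly
discontinuously and cocompactly, on a (nonempty) proper geodesic metric space `X`,
then `Γ` has a finite generating set `S`, and for every basepoint `x₀ ∈ X` the orbit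
map `g ↦ g • x₀` is a quasi-isometry from the Cayley graph `Δ(Γ, S)` (with its graph
distance) to `X`. -/
theorem milnor_svarc
    {X Γ : Type*} [MetricSpace X] [ProperSpace X] [Nonempty X]
    [Group Γ] [MulAction Γ X]
    (hgeo : ∀ x y : X, ∃ γ : ℝ → X, γ 0 = x ∧ γ (dist x y) = y ∧
      ∀ s ∈ Set.Icc (0 : ℝ) (dist x y), ∀ t ∈ Set.Icc (0 : ℝ) (dist x y),
        dist (γ s) (γ t) = |s - t|)
    (hiso : ∀ (g : Γ) (x y : X), dist (g • x) (g • y) = dist x y)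
    (hpd : ∀ (x : X) (r : ℝ), 0 ≤ r → {g : Γ | dist x (g • x) ≤ r}.Finite)
    (hcc : ∃ K : Set X, IsCompact K ∧ ∀ x : X, ∃ g : Γ, ∃ k ∈ K, x = g • k) :
    ∃ S : Finset Γ, Subgroup.closure (S : Set Γ) = ⊤ ∧
      ∀ x₀ : X,
        (∃ k₁ > (0 : ℝ), ∃ k₂ ≥ (0 : ℝ), ∃ k₃ ≥ (0 : ℝ), ∃ k₄ ≥ (0 : ℝ),
          ∀ g h : Γ,
            k₁ * ((cayleyGraph (S : Set Γ)).dist g h : ℝ) - k₂ ≤ dist (g • x₀) (h • x₀) ∧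
            dist (g • x₀) (h • x₀) ≤ k₃ * ((cayleyGraph (S : Set Γ)).dist g h : ℝ) + k₄) ∧
        (∃ r ≥ (0 : ℝ), ∀ y : X, ∃ g : Γ, dist y (g • x₀) ≤ r) :=
  milnor_svarc_general hgeo hiso hpd hcc
end

section
/- Let Γ be a finitely generated group and let H be a subgroup of Γ of finite index. Then H is finitely generated, and for any finite generating set T of H and any finite generating set S of Γ, the inclusion map H → Γ is a quasi-isometry from the Cayley graph Δ(H,T) to the Cayley graph Δ(Γ,S), both equipped with their graph distances. -/
/-- A map between the vertex sets of two graphs is a quasi-isometry with respect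
to the graph distances: it is bi-Lipschitz up to bounded error and has cobounded image. -/
def IsGraphQuasiIsometry {V W : Type*} (G : SimpleGraph V) (H : SimpleGraph W)
    (f : V → W) : Prop :=
  (∃ k₁ > (0 : ℝ), ∃ k₂ ≥ (0 : ℝ), ∃ k₃ ≥ (0 : ℝ), ∃ k₄ ≥ (0 : ℝ),
    ∀ x₁ x₂ : V,
      k₁ * (G.dist x₁ x₂ : ℝ) - k₂ ≤ (H.dist (f x₁) (f x₂) : ℝ) ∧
      (H.dist (f x₁) (f x₂) : ℝ) ≤ k₃ * (G.dist x₁ x₂ : ℝ) + k₄) ∧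
  (∃ r ≥ (0 : ℝ), ∀ y : W, ∃ x : V, (H.dist y (f x) : ℝ) ≤ r)

/-!
Finite generation of `H` is Schreier's lemma. For the quasi-isometry, pick a finite right
transversal `R` of `H` containing `1` and write each `g ∈ Γ` as `g = ρ(g) r` with `ρ(g) ∈ H`,
`r ∈ R`. The inclusion `H → Γ` and the retraction `ρ : Γ → H` both move adjacent vertices of the
Cayley graphs to points whose "difference" `a⁻¹ b` lies in a fixed finite set, hence both are
Lipschitz. Since `ρ` fixes `H`, the second bound is the lower quasi-isometry bound for the
inclusion, and every `g` is within `max_{r ∈ R} |r|_S` of `ρ(g)`.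
-/

open SimpleGraph Subgroup
open scoped Pointwise

namespace SimpleGraph

variable {V W : Type*} {G : SimpleGraph V} {G' : SimpleGraph W}

theorem Hom.edist_le (f : G →g G') (u v : V) : G'.edist (f u) (f v) ≤ G.edist u v := by
  by_cases h : G.Reachable u v
  · obtain ⟨p, hp⟩ := h.exists_walk_length_eq_edist
    calc G'.edist (f u) (f v) ≤ (p.map f).length := SimpleGraph.edist_le _
      _ = G.edist u v := by rw [Walk.length_map, hp]
  · rw [edist_eq_top_of_not_reachable h]
    exact le_top

theorem Iso.dist_eq (e : G ≃g G') (u v : V) : G'.dist (e u) (e v) = G.dist u v := by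
  have h := e.toHom.edist_le u v
  have h' := e.symm.toHom.edist_le (e u) (e v)
  simp only [RelHom.coeFn_mk, RelIso.coe_fn_toEquiv, RelIso.symm_apply_apply] at h h'
  rw [dist, dist, le_antisymm h h']

theorem dist_le_mul_dist_of_adj (hG : G.Connected) (hG' : G'.Connected) {f : V → W} {K : ℕ}
    (hf : ∀ x y, G.Adj x y → G'.dist (f x) (f y) ≤ K) (x y : V) :
    G'.dist (f x) (f y) ≤ K * G.dist x y := by
  suffices ∀ {x y : V} (p : G.Walk x y), G'.dist (f x) (f y) ≤ K * p.length by
    obtain ⟨p, hp⟩ := hG.exists_walk_length_eq_dist x y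
    exact hp ▸ this p
  intro x y p
  induction p with
  | nil => simp
  | @cons u v w hadj p ih =>
    calc G'.dist (f u) (f w) ≤ G'.dist (f u) (f v) + G'.dist (f v) (f w) := hG'.dist_triangle
      _ ≤ K + K * p.length := add_le_add (hf u v hadj) ih
      _ = K * (p.cons hadj).length := by rw [Walk.length_cons]; ring

theorem isGraphQuasiIsometry_of_dist_le (f : V → W) {K L r : ℕ}
    (hupper : ∀ x y, G'.dist (f x) (f y) ≤ K * G.dist x y)
    (hlower : ∀ x y, G.dist x y ≤ L * G'.dist (f x) (f y))
    (hcobounded : ∀ w, ∃ v, G'.dist w (f v) ≤ r) : IsGraphQuasiIsometry G G' f := by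
  refine ⟨⟨1 / (L + 1), by positivity, 0, le_rfl, K, by positivity, 0, le_rfl,
    fun x y => ⟨?_, ?_⟩⟩, ⟨r, by positivity, fun w => ?_⟩⟩
  · have hxy : (G.dist x y : ℝ) ≤ L * G'.dist (f x) (f y) := by exact_mod_cast hlower x y
    rw [sub_zero, one_div, inv_mul_le_iff₀ (by positivity)]
    nlinarith [(G'.dist (f x) (f y)).cast_nonneg (α := ℝ)]
  · rw [add_zero]
    exact_mod_cast hupper x y
  · obtain ⟨v, hv⟩ := hcobounded w
    exact ⟨v, by exact_mod_cast hv⟩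

end SimpleGraph

theorem Subgroup.exists_retraction_of_finiteIndex {G : Type*} [Group G] (H : Subgroup G)
    [H.FiniteIndex] :
    ∃ ρ : G → H, (∀ h : H, ρ h = h) ∧ (Set.range fun g => (ρ g : G)⁻¹ * g).Finite := by
  obtain ⟨R, hR, h1⟩ := H.exists_isComplement_right 1
  refine ⟨fun g => ⟨(hR.equiv g).1, (hR.equiv g).1.2⟩, fun h => ?_, hR.finite_right.subset ?_⟩
  · exact Subtype.ext (congrArg Subtype.val (hR.equiv_fst_eq_self_of_mem_of_one_mem h1 h.2))
  · rintro _ ⟨g, rfl⟩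
    change ((hR.equiv g).1 : G)⁻¹ * g ∈ R
    rw [← hR.equiv_snd_eq_inv_mul]
    exact (hR.equiv g).2.2

section CayleyGraph

variable {G G' : Type*} [Group G] [Group G']

@[simps!]
def cayleyGraphMulLeft (S : Set G) (c : G) : cayleyGraph S ≃g cayleyGraph S where
  toEquiv := Equiv.mulLeft c
  map_rel_iff' := by simp [cayleyGraph, mul_assoc]

theorem cayleyGraph_dist_eq_dist_one_inv_mul (S : Set G) (a b : G) :
    (cayleyGraph S).dist a b = (cayleyGraph S).dist 1 (a⁻¹ * b) := by
  simpa using ((cayleyGraphMulLeft S a⁻¹).dist_eq a b).symm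

theorem cayleyGraph_reachable_mul_left (S : Set G) (c : G) {a b : G}
    (h : (cayleyGraph S).Reachable a b) : (cayleyGraph S).Reachable (c * a) (c * b) :=
  h.map (cayleyGraphMulLeft S c).toHom

theorem cayleyGraph_connected {S : Set G} (hS : closure S = ⊤) : (cayleyGraph S).Connected := by
  have hreach : ∀ g : G, (cayleyGraph S).Reachable 1 g := fun g => by
    induction (hS ▸ mem_top g : g ∈ closure S) using closure_induction with
    | mem s hs =>
      by_cases hs1 : s = 1
      · rw [hs1]
      · exact Adj.reachable ⟨Ne.symm hs1, by simpa using Or.inl hs⟩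
    | one => rfl
    | mul a b _ _ ha hb => exact ha.trans (by simpa using cayleyGraph_reachable_mul_left S a hb)
    | inv a _ ha => simpa using (cayleyGraph_reachable_mul_left S a⁻¹ ha).symm
  exact (connected_iff _).mpr ⟨fun a b => (hreach a).symm.trans (hreach b), ⟨1⟩⟩

theorem cayleyGraph_exists_dist_le_of_inv_mul_mem (S : Set G) {F : Set G} (hF : F.Finite) :
    ∃ r : ℕ, ∀ a b : G, a⁻¹ * b ∈ F → (cayleyGraph S).dist a b ≤ r := by
  obtain ⟨r, hr⟩ := (hF.image ((cayleyGraph S).dist 1)).bddAbove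
  exact ⟨r, fun a b hab => cayleyGraph_dist_eq_dist_one_inv_mul S a b ▸ hr ⟨_, hab, rfl⟩⟩

theorem cayleyGraph_exists_dist_le_mul_of_adj {S : Set G} {S' : Set G'} (hS : closure S = ⊤)
    (hS' : closure S' = ⊤) (f : G → G') {F : Set G'} (hF : F.Finite)
    (hf : ∀ x y, (cayleyGraph S).Adj x y → (f x)⁻¹ * f y ∈ F) :
    ∃ K : ℕ, ∀ x y, (cayleyGraph S').dist (f x) (f y) ≤ K * (cayleyGraph S).dist x y := by
  obtain ⟨K, hK⟩ := cayleyGraph_exists_dist_le_of_inv_mul_mem S' hF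
  exact ⟨K, dist_le_mul_dist_of_adj (cayleyGraph_connected hS) (cayleyGraph_connected hS')
    fun x y hxy => hK _ _ (hf x y hxy)⟩

theorem cayleyGraph_exists_dist_map_le_mul (φ : G →* G') {S : Set G} {S' : Set G'}
    (hS : closure S = ⊤) (hS' : closure S' = ⊤) (hSfin : S.Finite) :
    ∃ K : ℕ, ∀ x y, (cayleyGraph S').dist (φ x) (φ y) ≤ K * (cayleyGraph S).dist x y :=
  cayleyGraph_exists_dist_le_mul_of_adj hS hS' φ ((hSfin.union hSfin.inv).image φ)
    fun x y hxy => ⟨x⁻¹ * y, hxy.2, by simp⟩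

theorem cayleyGraph_exists_dist_retraction_le_mul {H : Subgroup G} {S : Set G} {T : Set H}
    (hS : closure S = ⊤) (hT : closure T = ⊤) (hSfin : S.Finite) (ρ : G → H)
    (hρ : (Set.range fun g => (ρ g : G)⁻¹ * g).Finite) :
    ∃ L : ℕ, ∀ x y, (cayleyGraph T).dist (ρ x) (ρ y) ≤ L * (cayleyGraph S).dist x y := by
  set R := Set.range fun g => (ρ g : G)⁻¹ * g
  refine cayleyGraph_exists_dist_le_mul_of_adj hS hT ρ
    (F := Subtype.val ⁻¹' (R * (S ∪ S⁻¹) * R⁻¹))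
    (((hρ.mul (hSfin.union hSfin.inv)).mul hρ.inv).preimage Subtype.val_injective.injOn)
    fun x y hxy => ?_
  have hdiff : (ρ x : G)⁻¹ * ρ y = ((ρ x)⁻¹ * x) * (x⁻¹ * y) * ((ρ y)⁻¹ * y)⁻¹ := by
    simp [mul_assoc]
  rw [Set.mem_preimage, coe_mul, coe_inv, hdiff]
  exact Set.mul_mem_mul (Set.mul_mem_mul ⟨x, rfl⟩ hxy.2) (Set.inv_mem_inv.mpr ⟨y, rfl⟩)

end CayleyGraph

/-- **Finite-index subgroups are finitely generated and quasi-isometric to the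
ambient group.** If `Γ` is finitely generated and `H ≤ Γ` has finite index, then `H`
is finitely generated, and for any finite generating sets `T` of `H` and `S` of `Γ`,
the inclusion `H → Γ` is a quasi-isometry of Cayley graphs. -/
theorem subgroup_finiteIndex_quasiIsometric
    {Γ : Type*} [Group Γ] (hΓ : Group.FG Γ)
    (H : Subgroup Γ) (hfi : H.index ≠ 0) :
    Group.FG H ∧
    ∀ (T : Finset H) (S : Finset Γ),
      Subgroup.closure (T : Set H) = ⊤ → Subgroup.closure (S : Set Γ) = ⊤ →
      IsGraphQuasiIsometry (cayleyGraph (T : Set H)) (cayleyGraph (S : Set Γ))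
        (fun h => (h : Γ)) := by
  have : H.FiniteIndex := ⟨hfi⟩
  refine ⟨H.fg_of_index_ne_zero, fun T S hT hS => ?_⟩
  obtain ⟨ρ, hρH, hρfin⟩ := H.exists_retraction_of_finiteIndex
  obtain ⟨K, hK⟩ := cayleyGraph_exists_dist_map_le_mul H.subtype hT hS T.finite_toSet
  obtain ⟨L, hL⟩ := cayleyGraph_exists_dist_retraction_le_mul hS hT S.finite_toSet ρ hρfin
  obtain ⟨r, hr⟩ := cayleyGraph_exists_dist_le_of_inv_mul_mem (S : Set Γ) hρfin
  have hlower : ∀ x y : H,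
      (cayleyGraph (T : Set H)).dist x y ≤ L * (cayleyGraph (S : Set Γ)).dist x y :=
    fun x y => by simpa only [hρH] using hL x y
  exact isGraphQuasiIsometry_of_dist_le _ hK hlower
    fun g => ⟨ρ g, dist_comm ▸ hr _ _ ⟨g, rfl⟩⟩
end

section
/- Every edge of the Farey graph separates: for every pair of adjacent vertices u, v of F, the induced subgraph of F on the vertex set (ℚ ∪ {∞}) \ {u, v} is disconnected; that is, there exist vertices w₁, w₂ ∉ {u, v} such that every edge path in F from w₁ to w₂ passes through u or v. -/
/-!
Represent the vertex `p/q` by the primitive vector `(p, q) ∈ ℤ²` (and `∞` by `(1, 0)`), so that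
adjacency becomes `|det| = 1`. For an edge `uv`, the integer `det(u, x) * det(v, x)` does not
change when the vector `x` is replaced by `-x`; it vanishes only at `x ∈ {u, v}`, and by the
Plücker relation its sign is constant along every edge avoiding `u` and `v`. It equals `-1` at
the mediant `u + v` and `+1` at `u - v`, so the edge `uv` separates these two vertices.
-/

/-- Adjacency in the Farey graph on `ℚ ∪ {∞}`, where `∞` (the vertex `none`) is
regarded as `1/0`: two reduced fractions `p/q` and `r/s` are adjacent iff `|ps - rq| = 1`. -/
def fareyAdj : Option ℚ → Option ℚ → Prop
  | some p, some q => |p.num * (q.den : ℤ) - q.num * (p.den : ℤ)| = 1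
  | some p, none => p.den = 1
  | none, some q => q.den = 1
  | none, none => False

/-- The Farey graph: vertices are `ℚ ∪ {∞}` (modelled as `Option ℚ`, with `none = ∞ = 1/0`),
and `p/q`, `r/s` (in lowest terms) are adjacent iff `|ps - rq| = 1`. -/
def fareyGraph : SimpleGraph (Option ℚ) where
  Adj x y := fareyAdj x y
  symm := by
    constructor
    rintro (_ | p) (_ | q) h <;> simp_all [fareyAdj, abs_sub_comm]
  loopless := by
    constructor
    rintro (_ | p) h
    · exact h
    · simp [fareyAdj] at h

lemma Int.mul_nonneg_of_abs_sub_eq_one {X Y : ℤ} (h : |X - Y| = 1) : 0 ≤ X * Y := by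
  have hsq : (X - Y) ^ 2 = 1 := by rw [← sq_abs, h, one_pow]
  nlinarith [sq_nonneg (X + Y)]

namespace Farey

def vec : Option ℚ → ℤ × ℤ
  | none => (1, 0)
  | some a => (a.num, a.den)

def cross (a b : ℤ × ℤ) : ℤ := a.1 * b.2 - b.1 * a.2

lemma cross_mul_cross_sub_cross_mul_cross (a b w z : ℤ × ℤ) :
    cross a w * cross b z - cross a z * cross b w = cross a b * cross w z := by
  simp only [cross]; ring

lemma cross_self_add (a b : ℤ × ℤ) : cross a (a + b) = cross a b := by
  simp only [cross, Prod.fst_add, Prod.snd_add]; ring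

lemma cross_self_sub (a b : ℤ × ℤ) : cross a (a - b) = -cross a b := by
  simp only [cross, Prod.fst_sub, Prod.snd_sub]; ring

lemma isCoprime_of_abs_cross_eq_one {a w : ℤ × ℤ} (h : |cross a w| = 1) :
    IsCoprime w.1 w.2 := by
  rcases abs_eq zero_le_one |>.mp h with h | h
  · exact ⟨-a.2, a.1, by simp only [cross] at h; linarith⟩
  · exact ⟨a.2, -a.1, by simp only [cross] at h; linarith⟩

lemma adj_iff_abs_cross_eq_one (x y : Option ℚ) :
    fareyGraph.Adj x y ↔ |cross (vec x) (vec y)| = 1 := by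
  rcases x with _ | a <;> rcases y with _ | b <;> simp [fareyGraph, fareyAdj, cross, vec]

lemma eq_of_cross_eq_zero {x y : Option ℚ} (h : cross (vec x) (vec y) = 0) : x = y := by
  rcases x with _ | a <;> rcases y with _ | b <;> simp only [cross, vec] at h
  · rfl
  · exact absurd h (by simp [b.den_nz])
  · exact absurd h (by simp [a.den_nz])
  · congr
    rw [← Rat.num_div_den a, ← Rat.num_div_den b, div_eq_div_iff (by positivity) (by positivity)]
    exact_mod_cast sub_eq_zero.mp h

lemma exists_vec_eq_or_vec_eq_neg {w : ℤ × ℤ} (h : IsCoprime w.1 w.2) :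
    ∃ x, vec x = w ∨ vec x = -w := by
  obtain ⟨m, k⟩ := w
  have hnat (m k : ℤ) (h : IsCoprime m k) : Nat.Coprime m.natAbs k.natAbs :=
    Int.isCoprime_iff_gcd_eq_one.mp h
  rcases lt_trichotomy k 0 with hk | rfl | hk
  · refine ⟨some ((-m : ℤ) / (-k : ℤ) : ℚ), Or.inr ?_⟩
    have hc := hnat _ _ h.neg_neg
    simp only [vec, Rat.num_div_eq_of_coprime (neg_pos.2 hk) hc,
      Rat.den_div_eq_of_coprime (neg_pos.2 hk) hc]
    rfl
  · rcases Int.isUnit_iff.mp (isCoprime_zero_right.mp h) with rfl | rfl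
    · exact ⟨none, Or.inl rfl⟩
    · exact ⟨none, Or.inr rfl⟩
  · refine ⟨some ((m : ℚ) / (k : ℚ)), Or.inl ?_⟩
    have hc := hnat _ _ h
    simp [vec, Rat.num_div_eq_of_coprime hk hc, Rat.den_div_eq_of_coprime hk hc]

def side (a b w : ℤ × ℤ) : ℤ := cross a w * cross b w

lemma side_neg (a b w : ℤ × ℤ) : side a b (-w) = side a b w := by
  simp only [side, cross, Prod.fst_neg, Prod.snd_neg]; ring

lemma side_self_add (a b : ℤ × ℤ) : side a b (a + b) = -cross a b ^ 2 := by
  simp only [side, cross, Prod.fst_add, Prod.snd_add]; ring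

lemma side_self_sub (a b : ℤ × ℤ) : side a b (a - b) = cross a b ^ 2 := by
  simp only [side, cross, Prod.fst_sub, Prod.snd_sub]; ring

lemma exists_side_eq (a b : ℤ × ℤ) {w : ℤ × ℤ} (hw : IsCoprime w.1 w.2) :
    ∃ x, side a b (vec x) = side a b w := by
  obtain ⟨x, hx | hx⟩ := exists_vec_eq_or_vec_eq_neg hw
  exacts [⟨x, hx ▸ rfl⟩, ⟨x, by rw [hx, side_neg]⟩]

/-- The two products differ by `cross a b * cross w z = ±1` (Plücker), and two integers
differing by `1` never have strictly opposite signs. -/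
lemma side_pos_iff_of_abs_cross_eq_one {a b w z : ℤ × ℤ} (hab : |cross a b| = 1)
    (hwz : |cross w z| = 1) (hw : side a b w ≠ 0) (hz : side a b z ≠ 0) :
    0 < side a b w ↔ 0 < side a b z := by
  have hdiff : |cross a w * cross b z - cross a z * cross b w| = 1 := by
    rw [cross_mul_cross_sub_cross_mul_cross, abs_mul, hab, hwz, one_mul]
  have hprod : side a b w * side a b z = (cross a w * cross b z) * (cross a z * cross b w) := by
    simp only [side]; ring
  refine pos_iff_pos_of_mul_pos (lt_of_le_of_ne ?_ (mul_ne_zero hw hz).symm)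
  exact hprod ▸ Int.mul_nonneg_of_abs_sub_eq_one hdiff

variable {u v : Option ℚ}

lemma side_eq_zero_iff {x : Option ℚ} :
    side (vec u) (vec v) (vec x) = 0 ↔ x = u ∨ x = v := by
  refine ⟨fun h => ?_, ?_⟩
  · rcases mul_eq_zero.mp h with h | h
    exacts [.inl (eq_of_cross_eq_zero h).symm, .inr (eq_of_cross_eq_zero h).symm]
  · rintro (rfl | rfl) <;> simp [side, cross, mul_comm]

lemma side_pos_iff_of_walk (huv : fareyGraph.Adj u v) {a b : Option ℚ}
    (p : fareyGraph.Walk a b) (hu : u ∉ p.support) (hv : v ∉ p.support) :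
    0 < side (vec u) (vec v) (vec a) ↔ 0 < side (vec u) (vec v) (vec b) := by
  induction p with
  | nil => rfl
  | @cons a c b hac q ih =>
    simp only [SimpleGraph.Walk.support_cons, List.mem_cons, not_or] at hu hv
    have off {x} (hxu : u ≠ x) (hxv : v ≠ x) : side (vec u) (vec v) (vec x) ≠ 0 :=
      fun h => (side_eq_zero_iff.mp h).elim (hxu ·.symm) (hxv ·.symm)
    refine (side_pos_iff_of_abs_cross_eq_one ((adj_iff_abs_cross_eq_one u v).mp huv)
      ((adj_iff_abs_cross_eq_one a c).mp hac) (off hu.1 hv.1) (off ?_ ?_)).trans (ih hu.2 hv.2)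
    exacts [fun h => hu.2 (h ▸ q.start_mem_support), fun h => hv.2 (h ▸ q.start_mem_support)]

end Farey

open Farey

/-- **Every edge of the Farey graph separates.** For adjacent vertices `u, v` there
are vertices `w₁, w₂ ∉ {u, v}` such that every walk in the Farey graph from `w₁` to
`w₂` passes through `u` or `v`. -/
theorem fareyGraph_edge_separates (u v : Option ℚ) (huv : fareyGraph.Adj u v) :
    ∃ w₁ w₂ : Option ℚ, w₁ ∉ ({u, v} : Set (Option ℚ)) ∧ w₂ ∉ ({u, v} : Set (Option ℚ)) ∧
      ∀ p : fareyGraph.Walk w₁ w₂, u ∈ p.support ∨ v ∈ p.support := by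
  have hε := (adj_iff_abs_cross_eq_one u v).mp huv
  have hε2 : cross (vec u) (vec v) ^ 2 = 1 := by rw [← sq_abs, hε, one_pow]
  obtain ⟨w₁, hw₁⟩ := exists_side_eq (vec u) (vec v) <|
    isCoprime_of_abs_cross_eq_one (a := vec u) (w := vec u + vec v) (by rw [cross_self_add, hε])
  obtain ⟨w₂, hw₂⟩ := exists_side_eq (vec u) (vec v) <|
    isCoprime_of_abs_cross_eq_one (a := vec u) (w := vec u - vec v)
      (by rw [cross_self_sub, abs_neg, hε])
  rw [side_self_add, hε2] at hw₁
  rw [side_self_sub, hε2] at hw₂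
  refine ⟨w₁, w₂, fun h => ?_, fun h => ?_, fun p => ?_⟩
  · simp [side_eq_zero_iff.mpr h] at hw₁
  · simp [side_eq_zero_iff.mpr h] at hw₂
  · by_contra! hp
    simpa [hw₁, hw₂] using side_pos_iff_of_walk huv p hp.1 hp.2
end

section
/- Every edge of the Farey graph lies in exactly two triangles: for every pair of adjacent vertices u, v of F, there are exactly two vertices w of F that are adjacent to both u and v. -/
/-!
A vertex `p/q` of the Farey graph is the primitive vector `(p, q) ∈ ℤ²`, determined up to
sign, and adjacency is `|det| = 1`. An edge `u, v` is therefore a basis of `ℤ²`, and Cramer's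
rule `det(u, v) • w = det(u, w) • v - det(v, w) • u` shows that `w` is adjacent to both exactly
when `w = ±u ± v`. Up to sign these are the two vertices `u + v` and `u - v`.
-/

namespace Farey

def det (p q : ℤ × ℤ) : ℤ := p.1 * q.2 - q.1 * p.2

theorem det_smul_eq (u v w : ℤ × ℤ) : det u v • w = det u w • v - det v w • u := by
  ext <;> simp only [det, Prod.smul_fst, Prod.smul_snd, Prod.fst_sub, Prod.snd_sub, smul_eq_mul] <;>
    ring

@[simp] theorem det_self (u : ℤ × ℤ) : det u u = 0 := by
  rw [det, mul_comm, sub_self]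

theorem det_comm (u v : ℤ × ℤ) : det v u = -det u v := by
  rw [det, det]; ring

@[simp] theorem det_add_right (u v w : ℤ × ℤ) : det u (v + w) = det u v + det u w := by
  simp only [det, Prod.fst_add, Prod.snd_add]; ring

@[simp] theorem det_neg_right (u v : ℤ × ℤ) : det u (-v) = -det u v := by
  simp only [det, Prod.fst_neg, Prod.snd_neg]; ring

theorem isCoprime_of_abs_det_eq_one {p q : ℤ × ℤ} (h : |det p q| = 1) : IsCoprime q.1 q.2 := by
  rcases (abs_eq zero_le_one).mp h with h | h
  · exact ⟨-p.2, p.1, by rw [det] at h; linear_combination h⟩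
  · exact ⟨p.2, -p.1, by rw [det] at h; linear_combination -h⟩

def toVec : Option ℚ → ℤ × ℤ
  | some r => (r.num, r.den)
  | none => (1, 0)

def ofVec (p : ℤ × ℤ) : Option ℚ := if p.2 = 0 then none else some ((p.1 : ℚ) / p.2)

theorem fareyGraph_adj_iff (x y : Option ℚ) :
    fareyGraph.Adj x y ↔ |det (toVec x) (toVec y)| = 1 := by
  rcases x with _ | r <;> rcases y with _ | s <;> simp [fareyGraph, fareyAdj, toVec, det]

theorem ofVec_toVec (w : Option ℚ) : ofVec (toVec w) = w := by
  rcases w with _ | r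
  · rfl
  · simp [ofVec, toVec, r.den_nz, Rat.num_div_den]

theorem ofVec_neg (p : ℤ × ℤ) : ofVec (-p) = ofVec p := by
  simp only [ofVec, Prod.snd_neg, Prod.fst_neg, neg_eq_zero, Int.cast_neg, neg_div_neg_eq]

theorem toVec_ofVec_of_pos {p : ℤ × ℤ} (hp : IsCoprime p.1 p.2) (h₂ : 0 < p.2) :
    toVec (ofVec p) = p := by
  have hcop : p.1.natAbs.Coprime p.2.natAbs := Int.isCoprime_iff_gcd_eq_one.mp hp
  have hden : ((p.1 / p.2 : ℚ).den : ℤ) = p.2 := Rat.den_div_eq_of_coprime h₂ hcop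
  simp only [ofVec, h₂.ne', if_false, toVec, Rat.num_div_eq_of_coprime h₂ hcop, hden]

theorem toVec_ofVec {p : ℤ × ℤ} (hp : IsCoprime p.1 p.2) :
    toVec (ofVec p) = p ∨ toVec (ofVec p) = -p := by
  rcases lt_trichotomy p.2 0 with h₂ | h₂ | h₂
  · right
    rw [← ofVec_neg, toVec_ofVec_of_pos hp.neg_neg (by simpa using h₂)]
  · have : IsUnit p.1 := isCoprime_zero_right.mp (h₂ ▸ hp)
    rcases Int.isUnit_iff.mp this with h₁ | h₁
    · left; ext <;> simp [ofVec, toVec, h₁, h₂]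
    · right; ext <;> simp [ofVec, toVec, h₁, h₂]
  · exact .inl (toVec_ofVec_of_pos hp h₂)

theorem eq_ofVec_iff {p : ℤ × ℤ} (hp : IsCoprime p.1 p.2) (w : Option ℚ) :
    w = ofVec p ↔ toVec w = p ∨ toVec w = -p := by
  constructor
  · rintro rfl
    exact toVec_ofVec hp
  · rintro (h | h) <;> rw [← ofVec_toVec w, h]
    exact ofVec_neg p

theorem det_eq_zero_of_ofVec_eq_ofVec {p q : ℤ × ℤ} (hp : IsCoprime p.1 p.2)
    (hq : IsCoprime q.1 q.2) (h : ofVec p = ofVec q) : det p q = 0 := by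
  have hpq : q = p ∨ q = -p := by
    rcases (eq_ofVec_iff hp _).mp h.symm with h' | h' <;> rcases toVec_ofVec hq with hq | hq <;>
      rw [hq] at h' <;> grind
  rcases hpq with rfl | rfl <;> simp only [det, Prod.fst_neg, Prod.snd_neg] <;> ring

theorem common_neighbor_iff {u v : ℤ × ℤ} (huv : |det u v| = 1) (w : ℤ × ℤ) :
    (|det u w| = 1 ∧ |det v w| = 1) ↔
      w = u + v ∨ w = -(u + v) ∨ w = u - v ∨ w = -(u - v) := by
  constructor
  · rintro ⟨hδ, hγ⟩
    have hw := det_smul_eq u v w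
    rcases (abs_eq zero_le_one).mp huv with hε | hε <;>
      rcases (abs_eq zero_le_one).mp hδ with hδ | hδ <;>
      rcases (abs_eq zero_le_one).mp hγ with hγ | hγ <;>
      simp only [hε, hδ, hγ, Prod.ext_iff, Prod.smul_fst, Prod.smul_snd, Prod.fst_sub,
        Prod.snd_sub, Prod.fst_add, Prod.snd_add, Prod.fst_neg, Prod.snd_neg,
        smul_eq_mul] at hw ⊢ <;>
      omega
  · rintro (rfl | rfl | rfl | rfl) <;>
      simp [sub_eq_add_neg, det_comm u v, huv, abs_neg]

end Farey

open Farey in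
/-- **Every edge of the Farey graph lies in exactly two triangles:** any two adjacent
vertices `u, v` have exactly two common neighbours. -/
theorem fareyGraph_edge_two_triangles (u v : Option ℚ) (huv : fareyGraph.Adj u v) :
    ∃ w₁ w₂ : Option ℚ, w₁ ≠ w₂ ∧
      ∀ w : Option ℚ, (fareyGraph.Adj u w ∧ fareyGraph.Adj v w) ↔ (w = w₁ ∨ w = w₂) := by
  rw [fareyGraph_adj_iff] at huv
  set p := toVec u
  set q := toVec v
  have hsum : |det p (p + q)| = 1 := by simpa using huv
  have hdiff : |det p (p - q)| = 1 := by simpa [sub_eq_add_neg] using huv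
  refine ⟨ofVec (p + q), ofVec (p - q), fun h => ?_, fun w => ?_⟩
  · have h₀ := det_eq_zero_of_ofVec_eq_ofVec (isCoprime_of_abs_det_eq_one hsum)
      (isCoprime_of_abs_det_eq_one hdiff) h
    have h₂ : det (p + q) (p - q) = -2 * det p q := by
      simp only [det, Prod.fst_add, Prod.snd_add, Prod.fst_sub, Prod.snd_sub]; ring
    have : det p q = 0 := by omega
    simp [this] at huv
  · rw [fareyGraph_adj_iff, fareyGraph_adj_iff, common_neighbor_iff huv,
      eq_ofVec_iff (isCoprime_of_abs_det_eq_one hsum),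
      eq_ofVec_iff (isCoprime_of_abs_det_eq_one hdiff), or_assoc]
end

section
/- Let G and H be connected simple graphs, regarded as metric spaces via their graph distances, and let φ be a surjective map from the vertices of G to the vertices of H such that: (a) whenever x and y are adjacent in G, either φ(x) = φ(y) or φ(x) and φ(y) are adjacent in H; (b) there is a constant a ≥ 0 such that any two vertices of G with the same φ-image are at graph distance at most a in G; and (c) for every pair of adjacent vertices u, v of H there exist vertices x ∈ φ⁻¹(u) and y ∈ φ⁻¹(v) that are adjacent in G. Then for all vertices x, y of G one has d_H(φ(x), φ(y)) ≤ d_G(x, y) ≤ (a+1)·d_H(φ(x), φ(y)) + a; in particular, φ is a quasi-isometry from G to H. -/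
/-- **A criterion for a surjective map of connected graphs to be a quasi-isometry.**
Suppose `φ` maps the vertices of `G` onto those of `H` so that (a) adjacent vertices
go to equal or adjacent vertices, (b) any two vertices with the same image are at
distance at most `a` in `G`, and (c) every edge of `H` lifts to an edge of `G`. Then
`d_H(φ x, φ y) ≤ d_G(x, y) ≤ (a+1)·d_H(φ x, φ y) + a` for all vertices `x, y` of `G`;
in particular `φ` is a quasi-isometry. -/
theorem graph_map_quasiIsometry
    {V W : Type*} (G : SimpleGraph V) (H : SimpleGraph W)
    (hG : G.Connected) (hH : H.Connected)
    (φ : V → W) (hsurj : Function.Surjective φ)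
    (hadj : ∀ x y : V, G.Adj x y → φ x = φ y ∨ H.Adj (φ x) (φ y))
    (a : ℕ) (hfib : ∀ x y : V, φ x = φ y → G.dist x y ≤ a)
    (hlift : ∀ u v : W, H.Adj u v → ∃ x y : V, φ x = u ∧ φ y = v ∧ G.Adj x y) :
    (∀ x y : V, H.dist (φ x) (φ y) ≤ G.dist x y ∧
      G.dist x y ≤ (a + 1) * H.dist (φ x) (φ y) + a) ∧
    IsGraphQuasiIsometry G H φ := by
  -- lower bound along any walk in G
  have lower : ∀ {x y : V} (p : G.Walk x y), H.dist (φ x) (φ y) ≤ p.length := by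
    intro x y p
    induction p with
    | nil => simp
    | @cons x b y h p ih =>
      have h1 : H.dist (φ x) (φ b) ≤ 1 := by
        rcases hadj x b h with he | ha
        · rw [he, SimpleGraph.dist_self]; omega
        · have := SimpleGraph.dist_le (ha.toWalk)
          simpa using this
      calc H.dist (φ x) (φ y) ≤ H.dist (φ x) (φ b) + H.dist (φ b) (φ y) :=
            hH.dist_triangle
        _ ≤ 1 + p.length := Nat.add_le_add h1 ih
        _ = (SimpleGraph.Walk.cons h p).length := by
            rw [SimpleGraph.Walk.length_cons]; omega
  have lower' : ∀ x y : V, H.dist (φ x) (φ y) ≤ G.dist x y := by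
    intro x y
    obtain ⟨p, hp⟩ := hG.exists_walk_length_eq_dist x y
    simpa [hp] using lower p
  -- upper bound along any walk in H
  have upper : ∀ {u v : W} (q : H.Walk u v), ∀ x y : V, φ x = u → φ y = v →
      G.dist x y ≤ (a + 1) * q.length + a := by
    intro u v q
    induction q with
    | nil =>
      intro x y hx hy
      simpa using hfib x y (hx.trans hy.symm)
    | @cons u w v h q ih =>
      intro x y hx hy
      obtain ⟨x', y', hx', hy', hadj'⟩ := hlift u w h
      have d1 : G.dist x x' ≤ a := hfib x x' (hx.trans hx'.symm)
      have d2 : G.dist x' y' ≤ 1 := by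
        have := SimpleGraph.dist_le (hadj'.toWalk); simpa using this
      have d3 : G.dist y' y ≤ (a + 1) * q.length + a := ih y' y hy' hy
      calc G.dist x y ≤ G.dist x x' + G.dist x' y := hG.dist_triangle
        _ ≤ G.dist x x' + (G.dist x' y' + G.dist y' y) :=
            Nat.add_le_add_left hG.dist_triangle _
        _ ≤ a + (1 + ((a + 1) * q.length + a)) :=
            Nat.add_le_add d1 (Nat.add_le_add d2 d3)
        _ = (a + 1) * (q.length + 1) + a := by ring
        _ = (a + 1) * (SimpleGraph.Walk.cons h q).length + a := by
            simp [SimpleGraph.Walk.length_cons]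
  have upper' : ∀ x y : V, G.dist x y ≤ (a + 1) * H.dist (φ x) (φ y) + a := by
    intro x y
    obtain ⟨q, hq⟩ := hH.exists_walk_length_eq_dist (φ x) (φ y)
    simpa [hq] using upper q x y rfl rfl
  refine ⟨fun x y => ⟨lower' x y, upper' x y⟩, ?_, ?_⟩
  · refine ⟨1 / (a + 1), by positivity, a, by positivity, 1, by norm_num, 0, le_refl 0,
      fun x y => ⟨?_, ?_⟩⟩
    · have h := upper' x y
      have h' : (G.dist x y : ℝ) ≤ (a + 1) * (H.dist (φ x) (φ y) : ℝ) + a := by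
        exact_mod_cast h
      have ha1 : (0 : ℝ) < (a : ℝ) + 1 := by positivity
      rw [sub_le_iff_le_add, div_mul_eq_mul_div, one_mul, div_le_iff₀ ha1]
      nlinarith [Nat.cast_nonneg (α := ℝ) (H.dist (φ x) (φ y))]
    · have h := lower' x y
      have : (H.dist (φ x) (φ y) : ℝ) ≤ (G.dist x y : ℝ) := by exact_mod_cast h
      linarith
  · refine ⟨0, le_refl 0, fun y => ?_⟩
    obtain ⟨x, hx⟩ := hsurj y
    exact ⟨x, by rw [hx, SimpleGraph.dist_self]; norm_num⟩
end

section
/- The group PSL(2,ℤ) = SL(2,ℤ)/{±I} admits the presentation ⟨r, l | (l r⁻¹ l)² = 1, (l r⁻¹)³ = 1⟩: the presented group on two generators r, l with relators (l r⁻¹ l)² and (l r⁻¹)³ is isomorphic to SL(2,ℤ)/center via the homomorphism sending r to the class of the matrix [[1,1],[0,1]] and l to the class of the matrix [[1,0],[1,1]]. -/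
/-- The free-group generator corresponding to `r`. -/
def genR : FreeGroup Bool := FreeGroup.of false

/-- The free-group generator corresponding to `l`. -/
def genL : FreeGroup Bool := FreeGroup.of true

/-- The relators `(l r⁻¹ l)²` and `(l r⁻¹)³` of the presentation
`⟨r, l ∣ (l r⁻¹ l)² = 1, (l r⁻¹)³ = 1⟩`. -/
def pslRels : Set (FreeGroup Bool) :=
  {(genL * genR⁻¹ * genL) ^ 2, (genL * genR⁻¹) ^ 3}

/-- The matrix `[[1,1],[0,1]]` as an element of `SL(2, ℤ)`. -/
def matR : Matrix.SpecialLinearGroup (Fin 2) ℤ :=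
  ⟨!![1, 1; 0, 1], by simp [Matrix.det_fin_two_of]⟩

/-- The matrix `[[1,0],[1,1]]` as an element of `SL(2, ℤ)`. -/
def matL : Matrix.SpecialLinearGroup (Fin 2) ℤ :=
  ⟨!![1, 0; 1, 1], by simp [Matrix.det_fin_two_of]⟩

/-!
The relators say exactly that `s = l r⁻¹ l` and `u = l r⁻¹` have orders dividing `2` and `3`,
and `r = u⁻² s`, `l = u⁻¹ s`, so the presented group is a quotient of `ℤ/2 ∗ ℤ/3`. The
homomorphism `r ↦ T`, `l ↦ T S T` to `PSL(2, ℤ)` sends `s ↦ S` and `u ↦ T S`; it is onto because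
`S` and `T` generate `SL(2, ℤ)`. It is injective because the composite `ℤ/2 ∗ ℤ/3 → PSL(2, ℤ)` is:
acting on `ℍ`, `S` maps the right half-plane into the left one while `T S` and `(T S)²` map the
left half-plane into the right one, so the ping-pong lemma applies.
-/

open Matrix Matrix.SpecialLinearGroup ModularGroup MatrixGroups
open scoped UpperHalfPlane Pointwise

section ZModHom

variable {G : Type*} [Group G] (n : ℕ)

def zmodPowersHom (g : G) (hg : g ^ n = 1) : Multiplicative (ZMod n) →* G :=
  AddMonoidHom.toMultiplicativeLeft <| ZMod.lift n
    ⟨zmultiplesHom (Additive G) (Additive.ofMul g), by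
      simpa [← ofMul_zpow] using congrArg Additive.ofMul hg⟩

lemma zmodPowersHom_ofAdd_natCast (g : G) (hg : g ^ n = 1) (k : ℕ) :
    zmodPowersHom n g hg (.ofAdd k) = g ^ k := by
  simp only [zmodPowersHom, AddMonoidHom.coe_toMultiplicativeLeft, Function.comp_apply,
    toAdd_ofAdd]
  rw [← Int.cast_natCast (R := ZMod n) k, ZMod.lift_coe]
  simp only [zmultiplesHom_apply, natCast_zsmul, toMul_nsmul, toMul_ofMul]

lemma zmodPowersHom_apply [NeZero n] (g : G) (hg : g ^ n = 1) (x : Multiplicative (ZMod n)) :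
    zmodPowersHom n g hg x = g ^ (Multiplicative.toAdd x).val := by
  rw [← zmodPowersHom_ofAdd_natCast, ZMod.natCast_zmod_val, ofAdd_toAdd]

end ZModHom

namespace ModularGroup

lemma re_smul_eq_div (g : SL(2, ℤ)) (z : ℍ) :
    (g • z).re = (g 0 0 * g 1 0 * (z.re ^ 2 + z.im ^ 2) + (g 0 0 * g 1 1 + g 0 1 * g 1 0) * z.re +
        g 0 1 * g 1 1) / Complex.normSq (g 1 0 * (z : ℂ) + g 1 1) := by
  rw [← UpperHalfPlane.coe_re, UpperHalfPlane.coe_specialLinearGroup_apply, Complex.div_re,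
    ← add_div]
  simp only [algebraMap_int_eq, eq_intCast, Complex.ofReal_intCast, Complex.add_re,
    Complex.mul_re, Complex.intCast_re, Complex.intCast_im, UpperHalfPlane.coe_re,
    UpperHalfPlane.coe_im, Complex.add_im, Complex.mul_im]
  ring

lemma normSq_denom_pos (g : SL(2, ℤ)) (z : ℍ) : 0 < Complex.normSq (g 1 0 * (z : ℂ) + g 1 1) :=
  Complex.normSq_pos.mpr (UpperHalfPlane.denom_ne_zero g z)

lemma re_S_smul_neg {z : ℍ} (hz : 0 < z.re) : (S • z).re < 0 := by
  rw [re_smul_eq_div]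
  refine div_neg_of_neg_of_pos ?_ (normSq_denom_pos S z)
  norm_num
  exact hz

lemma re_T_mul_S_smul_pos {z : ℍ} (hz : z.re < 0) : 0 < ((T * S) • z).re := by
  have hTS : ((T * S : SL(2, ℤ)) : Matrix (Fin 2) (Fin 2) ℤ) = !![1, -1; 1, 0] := by decide
  rw [re_smul_eq_div]
  refine div_pos ?_ (normSq_denom_pos _ z)
  norm_num [hTS]
  nlinarith

lemma re_T_mul_S_sq_smul_pos {z : ℍ} (hz : z.re < 0) : 0 < ((T * S) ^ 2 • z).re := by
  have hTS2 : (((T * S) ^ 2 : SL(2, ℤ)) : Matrix (Fin 2) (Fin 2) ℤ) = !![0, -1; 1, -1] := by decide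
  rw [re_smul_eq_div]
  refine div_pos ?_ (normSq_denom_pos _ z)
  norm_num [hTS2]
  linarith

end ModularGroup

lemma SL2Z_mem_center_iff {A : SL(2, ℤ)} : A ∈ Subgroup.center SL(2, ℤ) ↔ A = 1 ∨ A = -1 := by
  rw [Matrix.SpecialLinearGroup.mem_center_iff]
  constructor
  · rintro ⟨r, hr, hA⟩
    rcases mul_self_eq_one_iff.mp (by simpa [sq] using hr) with rfl | rfl
    · left; ext : 1; simp [← hA]
    · right; ext : 1; simp [← hA]
  · rintro (rfl | rfl)
    · exact ⟨1, by simp, by simp⟩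
    · exact ⟨-1, by simp, by simp⟩

abbrev PSL2Z : Type := SL(2, ℤ) ⧸ Subgroup.center SL(2, ℤ)

namespace PSL2Z

lemma mk_neg_one : ((-1 : SL(2, ℤ)) : PSL2Z) = 1 :=
  (QuotientGroup.eq_one_iff _).mpr (SL2Z_mem_center_iff.mpr (.inr rfl))

noncomputable def toPerm : PSL2Z →* Equiv.Perm ℍ :=
  QuotientGroup.lift _ (MulAction.toPermHom SL(2, ℤ) ℍ) fun A hA => by
    rcases SL2Z_mem_center_iff.mp hA with rfl | rfl
    · exact map_one _
    · ext z; simp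

lemma toPerm_mk_apply (A : SL(2, ℤ)) (z : ℍ) : toPerm A z = A • z := rfl

end PSL2Z

def factorOrder (b : Bool) : ℕ := cond b 3 2

instance (b : Bool) : NeZero (factorOrder b) := ⟨by cases b <;> decide⟩

abbrev CyclicFactor (b : Bool) : Type := Multiplicative (ZMod (factorOrder b))

def presentedGen (b : Bool) : PresentedGroup pslRels :=
  cond b (.of true * (.of false)⁻¹) (.of true * (.of false)⁻¹ * .of true)

lemma presentedGen_pow_factorOrder (b : Bool) : presentedGen b ^ factorOrder b = 1 := by
  cases b
  · exact PresentedGroup.one_of_mem (x := (genL * genR⁻¹ * genL) ^ 2) (by simp [pslRels])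
  · exact PresentedGroup.one_of_mem (x := (genL * genR⁻¹) ^ 3) (by simp [pslRels])

def fromCoprodI : Monoid.CoprodI CyclicFactor →* PresentedGroup pslRels :=
  Monoid.CoprodI.lift fun b => zmodPowersHom _ (presentedGen b) (presentedGen_pow_factorOrder b)

lemma fromCoprodI_of_ofAdd_one (b : Bool) :
    fromCoprodI (.of (Multiplicative.ofAdd (1 : ZMod (factorOrder b)))) = presentedGen b := by
  rw [fromCoprodI, Monoid.CoprodI.lift_of, ← Nat.cast_one, zmodPowersHom_ofAdd_natCast, pow_one]

lemma fromCoprodI_surjective : Function.Surjective fromCoprodI := by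
  rw [← MonoidHom.range_eq_top, eq_top_iff, ← PresentedGroup.closure_range_of,
    Subgroup.closure_le]
  have hs : presentedGen false ∈ fromCoprodI.range := ⟨_, fromCoprodI_of_ofAdd_one false⟩
  have hu : presentedGen true ∈ fromCoprodI.range := ⟨_, fromCoprodI_of_ofAdd_one true⟩
  rintro _ ⟨_ | _, rfl⟩
  · have hr : PresentedGroup.of false =
        (presentedGen true)⁻¹ * (presentedGen true)⁻¹ * presentedGen false := by
      simp only [presentedGen, cond_true, cond_false]; group
    rw [hr]; exact mul_mem (mul_mem (inv_mem hu) (inv_mem hu)) hs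
  · have hl : PresentedGroup.of true = (presentedGen true)⁻¹ * presentedGen false := by
      simp only [presentedGen, cond_true, cond_false]; group
    rw [hl]; exact mul_mem (inv_mem hu) hs

def matGen (b : Bool) : SL(2, ℤ) := cond b matL matR

lemma lift_matGen_of_mem_pslRels {r : FreeGroup Bool} (hr : r ∈ pslRels) :
    FreeGroup.lift matGen r = -1 := by
  rcases hr with rfl | rfl <;>
    simp only [genL, genR, matGen, map_pow, map_mul, map_inv, FreeGroup.lift_apply_of, cond_true,
      cond_false] <;> decide

noncomputable def toPSL2Z : PresentedGroup pslRels →* PSL2Z :=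
  PresentedGroup.toGroup (f := fun b => (matGen b : PSL2Z)) fun r hr => by
    rw [← FreeGroup.lift_unique ((QuotientGroup.mk' _).comp (FreeGroup.lift matGen)) (by simp),
      MonoidHom.comp_apply, lift_matGen_of_mem_pslRels hr, QuotientGroup.mk'_apply,
      PSL2Z.mk_neg_one]

lemma toPSL2Z_of (b : Bool) : toPSL2Z (.of b) = (matGen b : PSL2Z) :=
  PresentedGroup.toGroup.of _

def ellipticGen (b : Bool) : SL(2, ℤ) := cond b (T * S) S

lemma matL_mul_matR_inv : matL * matR⁻¹ = T * S := by decide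

lemma T_mul_S_mul_matL : T * S * matL = S := by decide

lemma toPSL2Z_presentedGen (b : Bool) :
    toPSL2Z (presentedGen b) = (ellipticGen b : PSL2Z) := by
  cases b <;> simp only [presentedGen, ellipticGen, cond_true, cond_false, map_mul, map_inv,
    toPSL2Z_of, matGen, ← QuotientGroup.mk_inv, ← QuotientGroup.mk_mul, matL_mul_matR_inv,
    T_mul_S_mul_matL]

lemma toPSL2Z_surjective : Function.Surjective toPSL2Z := by
  rw [← MonoidHom.range_eq_top, eq_top_iff]
  have hT : (T : PSL2Z) ∈ toPSL2Z.range := ⟨.of false, toPSL2Z_of false⟩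
  have hS : (S : PSL2Z) ∈ toPSL2Z.range := ⟨presentedGen false, toPSL2Z_presentedGen false⟩
  calc ⊤ = (⊤ : Subgroup SL(2, ℤ)).map (QuotientGroup.mk' _) :=
        (Subgroup.map_top_of_surjective _ (QuotientGroup.mk'_surjective _)).symm
    _ = Subgroup.closure ((QuotientGroup.mk' _) '' {S, T}) := by
        rw [← SpecialLinearGroup.SL2Z_generators, MonoidHom.map_closure]
    _ ≤ toPSL2Z.range := by
        rw [Subgroup.closure_le, Set.image_pair]
        exact Set.insert_subset hS (Set.singleton_subset_iff.mpr hT)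

def halfPlane (b : Bool) : Set ℍ := cond b {z | 0 < z.re} {z | z.re < 0}

lemma ellipticGen_pow_smul_mem_halfPlane {i j : Bool} (hij : i ≠ j) {k : ℕ} (hk₀ : 0 < k)
    (hk : k < factorOrder i) {z : ℍ} (hz : z ∈ halfPlane j) :
    ellipticGen i ^ k • z ∈ halfPlane i := by
  cases i <;> cases j <;> simp only [ne_eq, not_true_eq_false] at hij <;>
    simp only [factorOrder, cond_true, cond_false] at hk <;> interval_cases k
  · rw [ellipticGen, cond_false, pow_one]; exact re_S_smul_neg hz
  · rw [ellipticGen, cond_true, pow_one]; exact re_T_mul_S_smul_pos hz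
  · exact re_T_mul_S_sq_smul_pos hz

lemma toPerm_toPSL2Z_presentedGen_pow_apply (b : Bool) (k : ℕ) (z : ℍ) :
    PSL2Z.toPerm (toPSL2Z (presentedGen b ^ k)) z = ellipticGen b ^ k • z := by
  rw [map_pow, toPSL2Z_presentedGen, ← QuotientGroup.mk_pow, PSL2Z.toPerm_mk_apply]

lemma toPerm_toPSL2Z_fromCoprodI_injective :
    Function.Injective (PSL2Z.toPerm ∘ toPSL2Z ∘ fromCoprodI) := by
  let f b : CyclicFactor b →* Equiv.Perm ℍ := (PSL2Z.toPerm.comp toPSL2Z).comp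
    (zmodPowersHom _ (presentedGen b) (presentedGen_pow_factorOrder b))
  have hf : Monoid.CoprodI.lift f = PSL2Z.toPerm.comp (toPSL2Z.comp fromCoprodI) :=
    Monoid.CoprodI.ext_hom _ _ fun b => by ext; simp [f, fromCoprodI]
  have hcard : 3 ≤ Cardinal.mk (CyclicFactor true) := by
    simp only [Cardinal.mk_fintype, Fintype.card_multiplicative, factorOrder, cond_true,
      Nat.ofNat_le_cast]
    decide
  have hnonempty : ∀ b, (halfPlane b).Nonempty := by
    rintro (_ | _)
    · exact ⟨(-1 : ℝ) +ᵥ UpperHalfPlane.I, by simp [halfPlane]⟩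
    · exact ⟨(1 : ℝ) +ᵥ UpperHalfPlane.I, by simp [halfPlane]⟩
  have hdisj : Pairwise (Function.onFun Disjoint halfPlane) := pairwise_disjoint_on_bool.mpr
    (Set.disjoint_left.mpr fun (z : ℍ) (hz : 0 < z.re) hz' => hz.not_gt hz')
  have hpp : Pairwise fun i j =>
      ∀ h : CyclicFactor i, h ≠ 1 → f i h • halfPlane j ⊆ halfPlane i := by
    rintro i j hij h hne _ ⟨z, hz, rfl⟩
    simp only [f, MonoidHom.comp_apply, zmodPowersHom_apply, Equiv.Perm.smul_def,
      toPerm_toPSL2Z_presentedGen_pow_apply]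
    exact ellipticGen_pow_smul_mem_halfPlane hij (ZMod.val_pos.mpr hne) (ZMod.val_lt _) hz
  have := Monoid.CoprodI.lift_injective_of_ping_pong f (Or.inr ⟨true, hcard⟩) halfPlane
    hnonempty hdisj hpp
  rwa [hf] at this

lemma toPSL2Z_injective : Function.Injective toPSL2Z :=
  toPerm_toPSL2Z_fromCoprodI_injective.of_comp.of_comp_right fromCoprodI_surjective

/-- **A presentation of `PSL(2, ℤ)`.** The group presented as
`⟨r, l ∣ (l r⁻¹ l)² = 1, (l r⁻¹)³ = 1⟩` is isomorphic to `SL(2, ℤ)` modulo its center,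
via an isomorphism sending `r` to the class of `[[1,1],[0,1]]` and `l` to the class of
`[[1,0],[1,1]]`. -/
theorem presentedGroup_iso_psl2z :
    ∃ φ : PresentedGroup pslRels ≃*
        (Matrix.SpecialLinearGroup (Fin 2) ℤ ⧸
          Subgroup.center (Matrix.SpecialLinearGroup (Fin 2) ℤ)),
      φ (PresentedGroup.of false) = QuotientGroup.mk matR ∧
      φ (PresentedGroup.of true) = QuotientGroup.mk matL :=
  ⟨.ofBijective toPSL2Z ⟨toPSL2Z_injective, toPSL2Z_surjective⟩, toPSL2Z_of false,
    toPSL2Z_of true⟩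
end
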